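/- arXiv:math/0503598 — 3 statements merged into one kernel-verified Lean document; each statement's English description precedes it below -/
import Mathlib

section
/- Let H be a separable Hilbert space and f an element of the symmetric tensor product H^{⊙n}. If for some p with 1 ≤ p ≤ n−1 the contraction f⊗_p f equals 0, then f = 0. -/
open scoped BigOperators

/-- If `f` is a symmetric element of the `n`-fold tensor product of a separable
Hilbert space (modelled as `ℓ²` over multi-indices, `n = p + q`) and the contraction
of order `p` (with `1 ≤ p ≤ n - 1`) vanishes, then `f = 0`. -/
theorem stmt_1 (p q : ℕ) (hp : 1 ≤ p) (hq : 1 ≤ q)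
    (f : lp (fun _ : Fin (p + q) → ℕ => ℝ) 2)
    (hsym : ∀ σ : Equiv.Perm (Fin (p + q)), ∀ i : Fin (p + q) → ℕ, f (i ∘ σ) = f i)
    (hcontr : ∀ s t : Fin q → ℕ,
      (∑' u : Fin p → ℕ, f (Fin.append u s) * f (Fin.append u t)) = 0) :
    f = 0 := by
  ext i
  set s : Fin q → ℕ := fun j => i (Fin.natAdd p j) with hs
  set u : Fin p → ℕ := fun j => i (Fin.castAdd q j) with hu
  have hi : i = Fin.append u s := by
    funext j
    refine Fin.addCases (fun j => ?_) (fun j => ?_) j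
    · simp [Fin.append_left, hu]
    · simp [Fin.append_right, hs]
  -- summability of the slice of squares
  have hsum2 : Summable (fun j : Fin (p + q) → ℕ => ‖f j‖ ^ 2) := by
    have := lp.memℓp f
    rw [memℓp_gen_iff (by norm_num : (0:ℝ) < (2 : ENNReal).toReal)] at this
    simpa using this.congr (fun j => by
      rw [← Real.rpow_natCast]; norm_num)
  have hinj : Function.Injective (fun v : Fin p → ℕ => Fin.append v s) := by
    intro a b hab
    funext j
    have := congrFun hab (Fin.castAdd q j)
    simpa [Fin.append_left] using this
  have hslice : Summable (fun v : Fin p → ℕ => f (Fin.append v s) * f (Fin.append v s)) := by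
    have := (hsum2.comp_injective hinj)
    simpa [Function.comp, Function.comp_def, sq, Real.norm_eq_abs, abs_mul_abs_self] using this
  have hle := Summable.le_tsum hslice u (fun j _ => mul_self_nonneg _)
  rw [hcontr s s] at hle
  have : f (Fin.append u s) * f (Fin.append u s) = 0 :=
    le_antisymm hle (mul_self_nonneg _)
  have h0 : f (Fin.append u s) = 0 := by
    have := mul_self_eq_zero.mp this
    exact this
  rw [hi]
  simpa [lp.coeFn_zero] using h0
end

section
/- Let N be a standard Gaussian random variable and H_n the nth Hermite polynomial. For n ≥ 2, the random variable H_n(N)/√(n!) has variance 1 but is not normally distributed. -/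
open MeasureTheory ProbabilityTheory Polynomial
open scoped NNReal

section HermiteAux
open Real Filter
open scoped ENNReal

noncomputable def hpoly (n : ℕ) : ℝ[X] := (hermite n).map (Int.castRingHom ℝ)


lemma int1 (P : ℝ[X]) : Integrable (fun x : ℝ => P.eval x * Real.exp (-x^2/2)) := by
  induction P using Polynomial.induction_on' with
  | add p q hp hq =>
    simp only [eval_add, add_mul]; exact hp.add hq
  | monomial k a =>
    have h := integrable_rpow_mul_exp_neg_mul_sq (b := 2⁻¹) (by norm_num)
      (s := (k : ℝ)) (by exact_mod_cast neg_one_lt_zero.trans_le (Nat.cast_nonneg k))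
    simp_rw [Real.rpow_natCast] at h
    have h2 := h.const_mul a
    refine h2.congr ?_
    filter_upwards with x
    simp [eval_monomial]
    ring_nf

lemma hasDeriv1 (P : ℝ[X]) (x : ℝ) :
    HasDerivAt (fun x : ℝ => P.eval x * Real.exp (-x^2/2))
      ((P.derivative.eval x - x * P.eval x) * Real.exp (-x^2/2)) x := by
  have h1 : HasDerivAt (fun x : ℝ => -x^2/2) (-x) x := by
    have := ((hasDerivAt_pow 2 x).neg.div_const 2); refine this.congr_deriv ?_; push_cast; ring
  have := (P.hasDerivAt x).mul h1.exp
  refine this.congr_deriv ?_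
  ring

lemma keyA (P : ℝ[X]) :
    ∫ x : ℝ, (P.derivative.eval x - x * P.eval x) * Real.exp (-x^2/2) = 0 := by
  refine integral_eq_zero_of_hasDerivAt_of_integrable (hasDeriv1 P) ?_ (int1 P)
  have := int1 (P.derivative - X * P)
  refine this.congr ?_
  filter_upwards with x
  simp


lemma keyB (P Q : ℝ[X]) :
    ∫ x : ℝ, (X * P - P.derivative).eval x * Q.eval x * Real.exp (-x^2/2)
      = ∫ x : ℝ, P.eval x * Q.derivative.eval x * Real.exp (-x^2/2) := by
  have h := keyA (P * Q)
  have e1 : (fun x : ℝ => ((P * Q).derivative.eval x - x * (P * Q).eval x) * Real.exp (-x^2/2))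
      = fun x : ℝ => P.eval x * Q.derivative.eval x * Real.exp (-x^2/2)
        - (X * P - P.derivative).eval x * Q.eval x * Real.exp (-x^2/2) := by
    funext x
    simp [derivative_mul]
    ring
  rw [e1] at h
  have i1 : Integrable (fun x : ℝ => P.eval x * Q.derivative.eval x * Real.exp (-x^2/2)) := by
    refine (int1 (P * Q.derivative)).congr ?_
    filter_upwards with x; simp
  have i2 : Integrable (fun x : ℝ => (X * P - P.derivative).eval x * Q.eval x * Real.exp (-x^2/2)) := by
    refine (int1 ((X * P - P.derivative) * Q)).congr ?_
    filter_upwards with x; simp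
  rw [integral_sub i1 i2, sub_eq_zero] at h
  exact h.symm


lemma hpoly_succ (n : ℕ) : hpoly (n+1) = X * hpoly n - (hpoly n).derivative := by
  unfold hpoly
  rw [hermite_succ]
  simp [Polynomial.map_sub, Polynomial.map_mul, derivative_map]

lemma aeval_eq_hpoly (n : ℕ) (x : ℝ) : aeval x (hermite n) = (hpoly n).eval x := by
  rw [aeval_def, hpoly, eval_map]
  rfl

lemma keyC (n : ℕ) : ∀ Q : ℝ[X],
    ∫ x : ℝ, (hpoly n).eval x * Q.eval x * Real.exp (-x^2/2)
      = ∫ x : ℝ, (derivative^[n] Q).eval x * Real.exp (-x^2/2) := by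
  induction n with
  | zero => intro Q; simp [hpoly, hermite_zero]
  | succ n ih =>
    intro Q
    rw [hpoly_succ, keyB, ih Q.derivative, ← Function.iterate_succ_apply]


lemma natDegree_hpoly (n : ℕ) : (hpoly n).natDegree = n := by
  unfold hpoly
  rw [natDegree_map_eq_of_injective (fun a b h => by simpa using h)]
  exact natDegree_hermite

lemma coeff_hpoly_self (n : ℕ) : (hpoly n).coeff n = 1 := by
  unfold hpoly
  rw [coeff_map, coeff_hermite_self]
  simp

lemma mean_hpoly (n : ℕ) (hn : 1 ≤ n) :
    ∫ x : ℝ, (hpoly n).eval x * Real.exp (-x^2/2) = 0 := by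
  have h := keyC n 1
  simp only [eval_one, mul_one] at h
  rw [h, Polynomial.iterate_derivative_eq_zero (by simp; omega)]
  simp

lemma iter_deriv_hpoly (n : ℕ) : derivative^[n] (hpoly n) = C (n.factorial : ℝ) := by
  have hdeg : (derivative^[n] (hpoly n)).natDegree = 0 := by
    have h1 := Polynomial.natDegree_iterate_derivative (hpoly n) n
    rw [natDegree_hpoly] at h1
    omega
  have hc : (derivative^[n] (hpoly n)).coeff 0 = (n.factorial : ℝ) := by
    rw [Polynomial.coeff_iterate_derivative]
    simp [coeff_hpoly_self, Nat.descFactorial_self]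
  rw [Polynomial.eq_C_of_natDegree_eq_zero hdeg, hc]

lemma gauss_int : ∫ x : ℝ, Real.exp (-x^2/2) = Real.sqrt (2 * Real.pi) := by
  have h := integral_gaussian (1/2)
  rw [div_div_eq_mul_div, div_one] at h
  rw [mul_comm 2 Real.pi, ← h]
  congr 1
  funext x
  ring_nf


lemma sqmom (n : ℕ) :
    ∫ x : ℝ, (hpoly n).eval x * (hpoly n).eval x * Real.exp (-x^2/2)
      = (n.factorial : ℝ) * Real.sqrt (2 * Real.pi) := by
  rw [keyC n (hpoly n), iter_deriv_hpoly]
  simp only [eval_C]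
  rw [integral_const_mul, gauss_int]


lemma pdfReal_eq (x : ℝ) :
    gaussianPDFReal 0 1 x = (Real.sqrt (2 * Real.pi))⁻¹ * Real.exp (-x^2/2) := by
  rw [gaussianPDFReal]
  norm_num

lemma gauss_eq : gaussianReal 0 1
    = (volume : Measure ℝ).withDensity (fun x => ((gaussianPDFReal 0 1 x).toNNReal : ℝ≥0∞)) := by
  rw [gaussianReal_of_var_ne_zero 0 one_ne_zero]
  rfl

lemma integral_gauss_eq (g : ℝ → ℝ) :
    ∫ x, g x ∂(gaussianReal 0 1) = ∫ x, gaussianPDFReal 0 1 x * g x := by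
  rw [gauss_eq, integral_withDensity_eq_integral_smul
    ((measurable_gaussianPDFReal 0 1).real_toNNReal)]
  congr 1
  funext x
  rw [NNReal.smul_def, Real.coe_toNNReal _ (gaussianPDFReal_nonneg 0 1 x), smul_eq_mul]

lemma int_poly_gauss (P : ℝ[X]) :
    Integrable (fun x : ℝ => P.eval x) (gaussianReal 0 1) := by
  rw [gauss_eq, integrable_withDensity_iff ((measurable_gaussianPDFReal 0 1).real_toNNReal.coe_nnreal_ennreal)
    (Filter.Eventually.of_forall fun _ => ENNReal.coe_lt_top)]
  have := (int1 P).const_mul (Real.sqrt (2 * Real.pi))⁻¹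
  refine this.congr ?_
  filter_upwards with x
  have hnn : (0:ℝ) ≤ (Real.sqrt (2*Real.pi))⁻¹ * Real.exp (-x^2/2) := by positivity
  simp only [ENNReal.coe_toReal, pdfReal_eq, Real.coe_toNNReal _ hnn]
  ring


lemma sqrtpi_pos : 0 < Real.sqrt (2 * Real.pi) := Real.sqrt_pos.2 (by positivity)

lemma integral_poly_gauss (P : ℝ[X]) :
    ∫ x, P.eval x ∂(gaussianReal 0 1)
      = (Real.sqrt (2 * Real.pi))⁻¹ * ∫ x : ℝ, P.eval x * Real.exp (-x^2/2) := by
  rw [integral_gauss_eq, ← integral_const_mul]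
  congr 1; funext x; rw [pdfReal_eq]; ring

lemma variance_part (n : ℕ) (hn : 2 ≤ n) :
    variance (fun x : ℝ => (aeval x (hermite n)) / Real.sqrt (Nat.factorial n))
      (gaussianReal 0 1) = 1 := by
  set s : ℝ := Real.sqrt (Nat.factorial n) with hs
  have hs_pos : 0 < s := Real.sqrt_pos.2 (by positivity)
  have hfun : (fun x : ℝ => (aeval x (hermite n)) / s)
      = fun x : ℝ => (C s⁻¹ * hpoly n).eval x := by
    funext x; rw [aeval_eq_hpoly]; simp [div_eq_inv_mul, mul_comm]
  rw [hfun]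
  have hmem : MemLp (fun x : ℝ => (C s⁻¹ * hpoly n).eval x) 2 (gaussianReal 0 1) := by
    rw [memLp_two_iff_integrable_sq]
    · refine (int_poly_gauss ((C s⁻¹ * hpoly n) * (C s⁻¹ * hpoly n))).congr ?_
      filter_upwards with x; simp; ring
    · exact (Polynomial.continuous _).aestronglyMeasurable
  rw [variance_eq_sub hmem]
  have h1 : (∫ x, (C s⁻¹ * hpoly n).eval x ∂(gaussianReal 0 1)) = 0 := by
    rw [integral_poly_gauss]
    have : ∫ x : ℝ, (C s⁻¹ * hpoly n).eval x * Real.exp (-x^2/2)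
        = s⁻¹ * ∫ x : ℝ, (hpoly n).eval x * Real.exp (-x^2/2) := by
      rw [← integral_const_mul]; congr 1; funext x; simp; ring
    rw [this, mean_hpoly n (by omega)]
    simp
  have h2 : (∫ x, ((fun x : ℝ => (C s⁻¹ * hpoly n).eval x) ^ 2) x ∂(gaussianReal 0 1)) = 1 := by
    have hrw : (fun x : ℝ => ((fun x : ℝ => (C s⁻¹ * hpoly n).eval x) ^ 2) x)
        = fun x : ℝ => ((C s⁻¹ * hpoly n) * (C s⁻¹ * hpoly n)).eval x := by
      funext x; simp [pow_two]
    rw [hrw, integral_poly_gauss]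
    have : ∫ x : ℝ, ((C s⁻¹ * hpoly n) * (C s⁻¹ * hpoly n)).eval x * Real.exp (-x^2/2)
        = s⁻¹ * s⁻¹ * ∫ x : ℝ, (hpoly n).eval x * (hpoly n).eval x * Real.exp (-x^2/2) := by
      rw [← integral_const_mul]; congr 1; funext x; simp; ring
    rw [this, sqmom]
    have hss : s * s = (n.factorial : ℝ) := Real.mul_self_sqrt (by positivity)
    have hinv : s⁻¹ * s⁻¹ = ((n.factorial : ℝ))⁻¹ := by rw [← mul_inv, hss]
    rw [hinv]
    field_simp
  rw [h2, h1]
  norm_num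

lemma tendsto_part (n : ℕ) (hn : 2 ≤ n) :
    Tendsto (fun x : ℝ => (Real.sqrt (Nat.factorial n))⁻¹ * (hpoly n).eval x - x^2/2)
      atTop atTop := by
  set s : ℝ := Real.sqrt (Nat.factorial n) with hs
  have hs_pos : 0 < s := Real.sqrt_pos.2 (by positivity)
  set r : ℝ[X] := C s⁻¹ * hpoly n - C 2⁻¹ * X^2 with hr
  have hcoeff : 0 < r.coeff n := by
    rw [hr]
    simp only [coeff_sub, coeff_C_mul, coeff_hpoly_self, coeff_X_pow]
    rcases eq_or_lt_of_le hn with h2 | h3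
    · subst h2
      simp only [if_pos rfl]
      have h1 : s < 2 := by
        rw [hs]
        have : Real.sqrt (Nat.factorial 2) < Real.sqrt 4 := by
          refine Real.sqrt_lt_sqrt (by positivity) ?_
          norm_num [Nat.factorial]
        calc Real.sqrt (Nat.factorial 2) < Real.sqrt 4 := this
        _ = 2 := by
          rw [show (4:ℝ) = 2^2 by norm_num, Real.sqrt_sq (by norm_num)]
      have := inv_strictAnti₀ hs_pos h1
      simp only [mul_one, if_true]
      linarith
    · rw [if_neg (by omega)]
      simp [inv_pos, hs_pos]
  have hdegle : r.natDegree ≤ n := by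
    refine le_trans (natDegree_sub_le _ _) (max_le ?_ ?_)
    · exact le_trans (natDegree_C_mul_le _ _) (le_of_eq (natDegree_hpoly n))
    · exact le_trans (natDegree_C_mul_le _ _) (le_trans (natDegree_X_pow_le 2) hn)
  have hdeg : r.natDegree = n :=
    le_antisymm hdegle (le_natDegree_of_ne_zero (ne_of_gt hcoeff))
  have hrne : r ≠ 0 := fun h => by simp [h] at hcoeff
  have hlead : 0 ≤ r.leadingCoeff := by
    rw [leadingCoeff, hdeg]; exact le_of_lt hcoeff
  have hdpos : 0 < r.degree := by
    rw [Polynomial.degree_eq_natDegree hrne, hdeg]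
    exact_mod_cast by omega
  have htend := Polynomial.tendsto_atTop_of_leadingCoeff_nonneg r hdpos hlead
  refine htend.congr fun x => ?_
  rw [hr]
  simp
  ring

lemma key_infinite (n : ℕ) (hn : 2 ≤ n) :
    ∫⁻ x, ENNReal.ofReal (Real.exp x)
      ∂(Measure.map (fun x : ℝ => (aeval x (hermite n)) / Real.sqrt (Nat.factorial n))
        (gaussianReal 0 1)) = ⊤ := by
  set s : ℝ := Real.sqrt (Nat.factorial n) with hs
  have hs_pos : 0 < s := Real.sqrt_pos.2 (by positivity)
  have hfun : (fun x : ℝ => (aeval x (hermite n)) / s)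
      = fun x : ℝ => (C s⁻¹ * hpoly n).eval x := by
    funext x; rw [aeval_eq_hpoly]; simp [div_eq_inv_mul, mul_comm]
  have hmeas : Measurable (fun x : ℝ => (aeval x (hermite n)) / s) := by
    rw [hfun]; exact (Polynomial.continuous _).measurable
  have hgm : Measurable (fun a : ℝ => ENNReal.ofReal (Real.exp ((aeval a) (hermite n) / s))) :=
    ENNReal.measurable_ofReal.comp (Real.measurable_exp.comp hmeas)
  rw [lintegral_map (f := fun x : ℝ => ENNReal.ofReal (Real.exp x))
    (ENNReal.measurable_ofReal.comp Real.measurable_exp) hmeas, gauss_eq,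
    lintegral_withDensity_eq_lintegral_mul _
      ((measurable_gaussianPDFReal 0 1).real_toNNReal.coe_nnreal_ennreal) hgm]
  -- obtain threshold M
  have htend := tendsto_part n hn
  obtain ⟨M, hM⟩ := (htend.eventually_ge_atTop (Real.log (Real.sqrt (2 * Real.pi)))).exists_forall_of_atTop
  rw [eq_top_iff]
  calc (⊤ : ℝ≥0∞) = ∫⁻ x in Set.Ici M, 1 ∂(volume : Measure ℝ) := by
        rw [setLIntegral_one, Real.volume_Ici]
    _ ≤ ∫⁻ x in Set.Ici M,
          ((fun x => ((gaussianPDFReal 0 1 x).toNNReal : ℝ≥0∞))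
            * fun a => ENNReal.ofReal (Real.exp ((aeval a) (hermite n) / s))) x
          ∂(volume : Measure ℝ) := by
        have hg : Measurable (fun x : ℝ => ((gaussianPDFReal 0 1 x).toNNReal : ℝ≥0∞)
            * ENNReal.ofReal (Real.exp ((aeval x) (hermite n) / s))) :=
          ((measurable_gaussianPDFReal 0 1).real_toNNReal.coe_nnreal_ennreal).mul
            (ENNReal.measurable_ofReal.comp (Real.measurable_exp.comp hmeas))
        refine setLIntegral_mono hg fun x hx => ?_
        · simp only [Pi.mul_apply, Pi.one_apply]
          have hb := hM x hx
          have hexp : Real.sqrt (2 * Real.pi)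
              ≤ Real.exp (s⁻¹ * (hpoly n).eval x - x^2/2) := by
            rw [← Real.exp_log (Real.sqrt_pos.2 (by positivity) : (0:ℝ) < Real.sqrt (2 * Real.pi))]
            exact Real.exp_le_exp.2 hb
          have h1 : (1 : ℝ) ≤ gaussianPDFReal 0 1 x * Real.exp (aeval x (hermite n) / s) := by
            rw [pdfReal_eq, aeval_eq_hpoly]
            have : (Real.sqrt (2 * Real.pi))⁻¹ * Real.exp (-x^2/2)
                * Real.exp ((hpoly n).eval x / s)
                = (Real.sqrt (2 * Real.pi))⁻¹ * Real.exp (s⁻¹ * (hpoly n).eval x - x^2/2) := by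
              rw [mul_assoc, ← Real.exp_add]
              congr 2
              field_simp
              ring
            rw [this]
            calc (1:ℝ) = (Real.sqrt (2 * Real.pi))⁻¹ * Real.sqrt (2 * Real.pi) := by
                  rw [inv_mul_cancel₀ (ne_of_gt (Real.sqrt_pos.2 (by positivity)))]
              _ ≤ _ := by
                  exact mul_le_mul_of_nonneg_left hexp (by positivity)
          calc (1 : ℝ≥0∞) = ENNReal.ofReal 1 := by simp
            _ ≤ ENNReal.ofReal (gaussianPDFReal 0 1 x * Real.exp (aeval x (hermite n) / s)) :=
                ENNReal.ofReal_le_ofReal h1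
            _ = _ := by
                rw [ENNReal.ofReal_mul (gaussianPDFReal_nonneg 0 1 x)]
                rfl
    _ ≤ _ := setLIntegral_le_lintegral _ _

lemma gauss_exp_fin (m : ℝ) (v : ℝ≥0) :
    ∫⁻ x, ENNReal.ofReal (Real.exp x) ∂(gaussianReal m v) ≠ ⊤ := by
  rcases eq_or_ne v 0 with hv | hv
  · subst hv
    rw [gaussianReal_zero_var, lintegral_dirac' (f := fun x : ℝ => ENNReal.ofReal (Real.exp x)) _
      (ENNReal.measurable_ofReal.comp Real.measurable_exp)]
    exact ENNReal.ofReal_ne_top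
  · have hv' : (0:ℝ) < (v:ℝ) := by positivity
    have hgm : Measurable (fun x : ℝ => ENNReal.ofReal (Real.exp x)) :=
      ENNReal.measurable_ofReal.comp Real.measurable_exp
    rw [gaussianReal_of_var_ne_zero m hv,
      lintegral_withDensity_eq_lintegral_mul _ (measurable_gaussianPDF m v) hgm]
    have hint : Integrable (fun x : ℝ => gaussianPDFReal m v x * Real.exp x) := by
      have hbase : Integrable (fun x : ℝ => Real.exp (-(2*(v:ℝ))⁻¹ * x^2)) :=
        integrable_exp_neg_mul_sq (by positivity)
      have h2 := ((hbase.comp_sub_right (m + v)).const_mul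
        ((Real.sqrt (2*Real.pi*v))⁻¹ * Real.exp (m + (v:ℝ)/2)))
      refine h2.congr ?_
      filter_upwards with x
      rw [gaussianPDFReal]
      rw [mul_assoc, ← Real.exp_add, mul_assoc (√(2 * Real.pi * (v:ℝ)))⁻¹, ← Real.exp_add]
      congr 2
      field_simp
      ring
    have hbound : ∫⁻ x, ((gaussianPDF m v x) * ENNReal.ofReal (Real.exp x)) ∂(volume : Measure ℝ)
        ≤ ∫⁻ x, (‖gaussianPDFReal m v x * Real.exp x‖₊ : ℝ≥0∞) ∂(volume : Measure ℝ) := by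
      refine lintegral_mono fun x => ?_
      rw [gaussianPDF_def, ← ENNReal.ofReal_mul (gaussianPDFReal_nonneg m v x)]
      exact Real.ofReal_le_enorm _
    exact ne_top_of_le_ne_top (ne_of_lt hint.hasFiniteIntegral) hbound

end HermiteAux

/-- For `n ≥ 2`, the normalized Hermite polynomial `H_n(N)/√(n!)` of a standard Gaussian
has variance `1` but is not normally distributed. -/
theorem stmt_4 (n : ℕ) (hn : 2 ≤ n) :
    variance (fun x : ℝ => (aeval x (hermite n)) / Real.sqrt (Nat.factorial n)) (gaussianReal 0 1) = 1 ∧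
    ∀ (m : ℝ) (v : ℝ≥0),
      Measure.map (fun x : ℝ => (aeval x (hermite n)) / Real.sqrt (Nat.factorial n)) (gaussianReal 0 1)
        ≠ gaussianReal m v := by
  refine ⟨variance_part n hn, fun m v h => ?_⟩
  have hkey := key_infinite n hn
  rw [h] at hkey
  exact gauss_exp_fin m v hkey
end

section
/- For the fractional Brownian variance functional, the variance Var(L_ε) = E[L_ε²] − (log(1/ε))² = 2·∫_ε¹∫_ε¹ R_H(t,s)² t^{−2H−1} s^{−2H−1} dt ds satisfies: for fixed H ∈ (0,1), there exist constants 0 < c ≤ C such that for all sufficiently small ε, c·log(1/ε) ≤ Var(L_ε) ≤ C·log(1/ε). -/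
open MeasureTheory

/-- Subadditivity of `x ^ p` for `0 ≤ p ≤ 1` on nonnegative reals. -/
lemma aux_rpow_subadd {p x y : ℝ} (hx : 0 ≤ x) (hy : 0 ≤ y) (hp : 0 ≤ p) (hp1 : p ≤ 1) :
    (x + y) ^ p ≤ x ^ p + y ^ p := by
  have h := NNReal.rpow_add_le_add_rpow x.toNNReal y.toNNReal hp hp1
  have h' := NNReal.coe_le_coe.2 h
  simpa [NNReal.coe_rpow, Real.coe_toNNReal x hx, Real.coe_toNNReal y hy] using h'

/-- Nonnegativity of the fBm covariance for `0 < s ≤ t`. -/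
lemma aux_num_nonneg {p : ℝ} (hp0 : 0 < p) {s t : ℝ} (hs : 0 < s) (hst : s ≤ t) :
    0 ≤ (1/2 : ℝ) * (s ^ p + t ^ p - |t - s| ^ p) := by
  have ht : 0 < t := hs.trans_le hst
  have habs : |t - s| = t - s := abs_of_nonneg (by linarith)
  have h1 : (t - s) ^ p ≤ t ^ p :=
    Real.rpow_le_rpow (by linarith) (by linarith) hp0.le
  have h2 : 0 ≤ s ^ p := Real.rpow_nonneg hs.le p
  rw [habs]; linarith

/-- Upper bound for the fBm covariance for `0 < s ≤ t`:
`R(t,s) ≤ (3/2) s^a t^(p-a)` with `a = min p 1`. -/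
lemma aux_num_le {p : ℝ} (hp0 : 0 < p) (hp2 : p ≤ 2) {s t : ℝ} (hs : 0 < s) (hst : s ≤ t) :
    (1/2 : ℝ) * (s ^ p + t ^ p - |t - s| ^ p)
      ≤ 3/2 * (s ^ min p 1 * t ^ (p - min p 1)) := by
  have ht : 0 < t := hs.trans_le hst
  have habs : |t - s| = t - s := abs_of_nonneg (by linarith)
  rcases le_total p 1 with h1 | h1
  · rw [min_eq_left h1, sub_self, Real.rpow_zero, mul_one]
    have hsub : t ^ p ≤ (t - s) ^ p + s ^ p := by
      have := aux_rpow_subadd (x := t - s) (y := s) (by linarith) hs.le hp0.le h1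
      rwa [sub_add_cancel] at this
    have hsp : 0 ≤ s ^ p := Real.rpow_nonneg hs.le p
    rw [habs]; linarith
  · rw [min_eq_right h1, Real.rpow_one]
    have hB : (0:ℝ) ≤ s * t ^ (p - 1) :=
      mul_nonneg hs.le (Real.rpow_nonneg ht.le _)
    have key1 : s ^ p ≤ s * t ^ (p - 1) := by
      have e : s ^ p = s * s ^ (p - 1) := by
        rw [show p = 1 + (p - 1) by ring, Real.rpow_add hs, Real.rpow_one]
        ring_nf
      rw [e]
      have : s ^ (p - 1) ≤ t ^ (p - 1) :=
        Real.rpow_le_rpow hs.le hst (by linarith)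
      exact mul_le_mul_of_nonneg_left this hs.le
    have key2 : t ^ p - p * (s * t ^ (p - 1)) ≤ (t - s) ^ p := by
      have hb : (1 : ℝ) + p * (-(s/t)) ≤ (1 + -(s/t)) ^ p := by
        apply one_add_mul_self_le_rpow_one_add _ h1
        have : s / t ≤ 1 := div_le_one_of_le₀ hst ht.le
        linarith
      have h1st : (0:ℝ) ≤ 1 - s / t := by
        have : s / t ≤ 1 := div_le_one_of_le₀ hst ht.le
        linarith
      have e1 : t ^ p * (1 + -(s/t)) ^ p = (t - s) ^ p := by
        rw [← Real.mul_rpow ht.le (by linarith)]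
        congr 1
        field_simp
        ring
      have e2 : t ^ p * (s / t) = s * t ^ (p - 1) := by
        rw [Real.rpow_sub ht, Real.rpow_one]
        field_simp
      have := mul_le_mul_of_nonneg_left hb (Real.rpow_nonneg ht.le p)
      rw [e1] at this
      calc t ^ p - p * (s * t ^ (p - 1)) = t ^ p * (1 + p * (-(s/t))) := by
            rw [← e2]; ring
        _ ≤ (t - s) ^ p := this
    have hp2' : p * (s * t ^ (p - 1)) ≤ 2 * (s * t ^ (p - 1)) :=
      mul_le_mul_of_nonneg_right hp2 hB
    rw [habs]; linarith

/-- Pointwise upper bound on the integrand for `0 < s ≤ t`. -/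
lemma aux_g_le {p : ℝ} (hp0 : 0 < p) (hp2 : p ≤ 2) {s t : ℝ} (hs : 0 < s) (hst : s ≤ t)
    {δ : ℝ} (hδ : δ = 2 * min p 1 - p) :
    ((1/2 : ℝ) * (s ^ p + t ^ p - |t - s| ^ p)) ^ 2 / (t ^ (p + 1) * s ^ (p + 1))
      ≤ 9/4 * (t ^ (-δ - 1) * s ^ (δ - 1)) := by
  have ht : 0 < t := hs.trans_le hst
  set a := min p 1 with ha
  have ha0 : 0 < a := lt_min hp0 one_pos
  have hnum0 := aux_num_nonneg hp0 hs hst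
  have hnum := aux_num_le hp0 hp2 hs hst
  have hsq : ((1/2 : ℝ) * (s ^ p + t ^ p - |t - s| ^ p)) ^ 2
      ≤ (3/2 * (s ^ a * t ^ (p - a))) ^ 2 := by
    exact pow_le_pow_left₀ hnum0 hnum 2
  have hsq2 : (3/2 * (s ^ a * t ^ (p - a))) ^ 2
      = 9/4 * (s ^ (2*a) * t ^ (2*p - 2*a)) := by
    have es : (s ^ a) ^ (2:ℕ) = s ^ (2*a) := by
      rw [← Real.rpow_natCast (s ^ a) 2, ← Real.rpow_mul hs.le]
      norm_num; ring_nf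
    have et : (t ^ (p - a)) ^ (2:ℕ) = t ^ (2*p - 2*a) := by
      rw [← Real.rpow_natCast (t ^ (p - a)) 2, ← Real.rpow_mul ht.le]
      congr 1; ring
    calc (3/2 * (s ^ a * t ^ (p - a))) ^ 2
        = 9/4 * ((s ^ a) ^ (2:ℕ) * (t ^ (p - a)) ^ (2:ℕ)) := by ring
      _ = 9/4 * (s ^ (2*a) * t ^ (2*p - 2*a)) := by rw [es, et]
  have hD : 0 < t ^ (p + 1) * s ^ (p + 1) :=
    mul_pos (Real.rpow_pos_of_pos ht _) (Real.rpow_pos_of_pos hs _)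
  have step1 : ((1/2 : ℝ) * (s ^ p + t ^ p - |t - s| ^ p)) ^ 2 / (t ^ (p + 1) * s ^ (p + 1))
      ≤ (9/4 * (s ^ (2*a) * t ^ (2*p - 2*a))) / (t ^ (p + 1) * s ^ (p + 1)) := by
    exact div_le_div_of_nonneg_right (hsq.trans_eq hsq2) hD.le
  refine step1.trans_eq ?_
  have e : (9/4 * (s ^ (2*a) * t ^ (2*p - 2*a))) / (t ^ (p + 1) * s ^ (p + 1))
      = 9/4 * (t ^ (2*p - 2*a - (p + 1)) * s ^ (2*a - (p + 1))) := by
    have et : t ^ (2*p - 2*a - (p + 1)) = t ^ (2*p - 2*a) / t ^ (p+1) :=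
      Real.rpow_sub ht _ _
    have es : s ^ (2*a - (p + 1)) = s ^ (2*a) / s ^ (p+1) :=
      Real.rpow_sub hs _ _
    rw [et, es]
    ring
  rw [e]
  congr 2
  · congr 1; rw [hδ]; ring
  · congr 1; rw [hδ]; ring

/-- Pointwise lower bound on the integrand for `t/2 ≤ s ≤ t`. -/
lemma aux_g_ge {p : ℝ} (hp0 : 0 < p) {s t : ℝ} (ht : 0 < t) (h1 : t/2 ≤ s) (h2 : s ≤ t) :
    (1/4 : ℝ) * t ^ (-2 : ℝ)
      ≤ ((1/2 : ℝ) * (s ^ p + t ^ p - |t - s| ^ p)) ^ 2 / (t ^ (p + 1) * s ^ (p + 1)) := by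
  have hs : 0 < s := lt_of_lt_of_le (by linarith) h1
  have habs : |t - s| = t - s := abs_of_nonneg (by linarith)
  have hb : (t - s) ^ p ≤ s ^ p :=
    Real.rpow_le_rpow (by linarith) (by linarith) hp0.le
  have hnum : (1/2 : ℝ) * t ^ p ≤ (1/2 : ℝ) * (s ^ p + t ^ p - |t - s| ^ p) := by
    rw [habs]; linarith
  have hnum0 : (0:ℝ) ≤ (1/2 : ℝ) * t ^ p := by positivity
  have hsq : ((1/2 : ℝ) * t ^ p) ^ 2 ≤ ((1/2 : ℝ) * (s ^ p + t ^ p - |t - s| ^ p)) ^ 2 :=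
    pow_le_pow_left₀ hnum0 hnum 2
  have hsqval : ((1/2 : ℝ) * t ^ p) ^ 2 = 1/4 * t ^ (2*p) := by
    have : (t ^ p) ^ (2:ℕ) = t ^ (2*p) := by
      rw [← Real.rpow_natCast (t ^ p) 2, ← Real.rpow_mul ht.le]
      congr 1; ring
    calc ((1/2 : ℝ) * t ^ p) ^ 2 = 1/4 * (t ^ p) ^ (2:ℕ) := by ring
      _ = 1/4 * t ^ (2*p) := by rw [this]
  have hDpos : 0 < t ^ (p + 1) * s ^ (p + 1) :=
    mul_pos (Real.rpow_pos_of_pos ht _) (Real.rpow_pos_of_pos hs _)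
  have hDle : t ^ (p + 1) * s ^ (p + 1) ≤ t ^ (2*p + 2) := by
    have h' : s ^ (p + 1) ≤ t ^ (p + 1) :=
      Real.rpow_le_rpow hs.le h2 (by linarith)
    calc t ^ (p + 1) * s ^ (p + 1) ≤ t ^ (p + 1) * t ^ (p + 1) :=
          mul_le_mul_of_nonneg_left h' (Real.rpow_nonneg ht.le _)
      _ = t ^ (2*p + 2) := by rw [← Real.rpow_add ht]; congr 1; ring
  have e : (1/4 : ℝ) * t ^ (-2 : ℝ) = (1/4 * t ^ (2*p)) / t ^ (2*p + 2) := by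
    rw [eq_div_iff (ne_of_gt (Real.rpow_pos_of_pos ht _)), mul_assoc, ← Real.rpow_add ht]
    congr 2; ring
  rw [e]
  exact div_le_div₀ (sq_nonneg _) (hsqval.symm.trans_le hsq) hDpos hDle

/-- Two-sided logarithmic growth of the variance of `L_ε`:
`Var(L_ε) = 2 ∫_ε¹∫_ε¹ R_H(t,s)² t^{-2H-1} s^{-2H-1} dt ds` is bounded above and below by
constant multiples of `log(1/ε)` for all sufficiently small `ε`. -/
theorem stmt_12 (H : ℝ) (hH : H ∈ Set.Ioo (0:ℝ) 1) :
    ∃ c C : ℝ, 0 < c ∧ c ≤ C ∧ ∃ ε₀ ∈ Set.Ioo (0:ℝ) 1, ∀ ε ∈ Set.Ioo (0:ℝ) ε₀,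
      c * Real.log (1/ε)
          ≤ 2 * ∫ t in Set.Icc ε 1, ∫ s in Set.Icc ε 1,
              ((1/2 : ℝ) * (s ^ (2*H) + t ^ (2*H) - |t - s| ^ (2*H))) ^ 2
                / (t ^ (2*H + 1) * s ^ (2*H + 1))
      ∧ 2 * ∫ t in Set.Icc ε 1, ∫ s in Set.Icc ε 1,
              ((1/2 : ℝ) * (s ^ (2*H) + t ^ (2*H) - |t - s| ^ (2*H))) ^ 2
                / (t ^ (2*H + 1) * s ^ (2*H + 1))
          ≤ C * Real.log (1/ε) := by
  obtain ⟨hH0, hH1⟩ := hH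
  set p := 2*H with hpdef
  have hp0 : 0 < p := by positivity
  have hp2 : p ≤ 2 := by simp only [hpdef]; linarith
  set δ := min p (2 - p) with hδdef
  have hδ0 : 0 < δ := lt_min hp0 (by linarith)
  have hδ1 : δ ≤ 1 := by
    rcases le_total p 1 with h | h
    · exact (min_le_left _ _).trans h
    · exact (min_le_right _ _).trans (by linarith)
  have hδeq : δ = 2 * min p 1 - p := by
    rcases le_total p 1 with h | h
    · rw [hδdef, min_eq_left (by linarith : p ≤ 2 - p), min_eq_left h]; ring
    · rw [hδdef, min_eq_right (by linarith : 2 - p ≤ p), min_eq_right h]; ring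
  refine ⟨1/16, 9/δ, by norm_num, ?_, 1/4, by norm_num, ?_⟩
  · have h9 : (9:ℝ) ≤ 9/δ := by
      rw [le_div_iff₀ hδ0]; nlinarith
    linarith
  intro ε hε
  obtain ⟨hε0, hε14⟩ := hε
  have hε1 : ε < 1 := hε14.trans (by norm_num)
  -- the integrand and the inner integral
  set g : ℝ → ℝ → ℝ := fun t s =>
    ((1/2 : ℝ) * (s ^ p + t ^ p - |t - s| ^ p)) ^ 2 / (t ^ (p + 1) * s ^ (p + 1)) with hgdef
  set F : ℝ → ℝ := fun t => ∫ s in Set.Icc ε 1, g t s with hFdef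
  -- basic properties of g
  have hg0 : ∀ t s : ℝ, 0 < t → 0 < s → 0 ≤ g t s := by
    intro t s ht hs
    apply div_nonneg (sq_nonneg _)
    exact le_of_lt (mul_pos (Real.rpow_pos_of_pos ht _) (Real.rpow_pos_of_pos hs _))
  have hgcont : ∀ t : ℝ, 0 < t → ContinuousOn (g t) (Set.Icc ε 1) := by
    intro t ht
    have c1 : Continuous fun s : ℝ => s ^ p := Real.continuous_rpow_const hp0.le
    have c2 : Continuous fun s : ℝ => |t - s| ^ p :=
      (Real.continuous_rpow_const hp0.le).comp ((continuous_const.sub continuous_id).abs)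
    have cnum : Continuous fun s : ℝ =>
        ((1/2 : ℝ) * (s ^ p + t ^ p - |t - s| ^ p)) ^ 2 :=
      (continuous_const.mul ((c1.add continuous_const).sub c2)).pow 2
    have cden : Continuous fun s : ℝ => t ^ (p + 1) * s ^ (p + 1) :=
      continuous_const.mul (Real.continuous_rpow_const (by linarith))
    apply cnum.continuousOn.div cden.continuousOn
    intro s hs
    exact ne_of_gt (mul_pos (Real.rpow_pos_of_pos ht _)
      (Real.rpow_pos_of_pos (hε0.trans_le hs.1) _))
  have hgint : ∀ t : ℝ, 0 < t → IntegrableOn (g t) (Set.Icc ε 1) := fun t ht =>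
    (hgcont t ht).integrableOn_compact isCompact_Icc
  have hF0 : ∀ t ∈ Set.Icc ε (1:ℝ), 0 ≤ F t := by
    intro t htA
    apply setIntegral_nonneg measurableSet_Icc
    intro s hs
    exact hg0 t s (hε0.trans_le htA.1) (hε0.trans_le hs.1)
  -- upper bound on the inner integral
  have hFup : ∀ t ∈ Set.Icc ε (1:ℝ), F t ≤ 9/(2*δ) * t⁻¹ := by
    intro t htA
    have ht : 0 < t := hε0.trans_le htA.1
    have hdisj : Disjoint (Set.Icc ε t) (Set.Ioc t 1) :=
      (Set.Iic_disjoint_Ioc le_rfl).mono Set.Icc_subset_Iic_self le_rfl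
    have int1 : IntegrableOn (g t) (Set.Icc ε t) :=
      (hgint t ht).mono_set (Set.Icc_subset_Icc le_rfl htA.2)
    have int2 : IntegrableOn (g t) (Set.Ioc t 1) :=
      (hgint t ht).mono_set ((Set.Ioc_subset_Icc_self).trans (Set.Icc_subset_Icc htA.1 le_rfl))
    have hsplit : F t = (∫ s in Set.Icc ε t, g t s) + ∫ s in Set.Ioc t 1, g t s := by
      rw [hFdef]
      rw [show Set.Icc ε (1:ℝ) = Set.Icc ε t ∪ Set.Ioc t 1 from
        (Set.Icc_union_Ioc_eq_Icc htA.1 htA.2).symm]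
      exact setIntegral_union hdisj measurableSet_Ioc int1 int2
    -- first piece
    have intb1 : IntegrableOn (fun s : ℝ => 9/4 * t ^ (-δ - 1) * s ^ (δ - 1)) (Set.Icc ε t) := by
      apply ContinuousOn.integrableOn_compact isCompact_Icc
      apply continuousOn_const.mul
      intro s hs
      exact (Real.continuousAt_rpow_const s (δ - 1)
        (Or.inl (ne_of_gt (hε0.trans_le hs.1)))).continuousWithinAt
    have hb1 : (∫ s in Set.Icc ε t, g t s) ≤ 9/(4*δ) * t⁻¹ := by
      have step : (∫ s in Set.Icc ε t, g t s)
          ≤ ∫ s in Set.Icc ε t, 9/4 * t ^ (-δ - 1) * s ^ (δ - 1) := by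
        apply setIntegral_mono_on int1 intb1 measurableSet_Icc
        intro s hs
        have := aux_g_le hp0 hp2 (hε0.trans_le hs.1) hs.2 hδeq
        calc g t s ≤ 9/4 * (t ^ (-δ - 1) * s ^ (δ - 1)) := this
          _ = 9/4 * t ^ (-δ - 1) * s ^ (δ - 1) := by ring
      have hcomp : ∫ s in Set.Icc ε t, 9/4 * t ^ (-δ - 1) * s ^ (δ - 1)
          = 9/4 * t ^ (-δ - 1) * ((t ^ δ - ε ^ δ)/δ) := by
        rw [MeasureTheory.integral_const_mul]
        congr 1
        rw [integral_Icc_eq_integral_Ioc, ← intervalIntegral.integral_of_le htA.1,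
          integral_rpow (Or.inl (by linarith))]
        have h1 : δ - 1 + 1 = δ := by ring
        rw [h1]
      have hfin : 9/4 * t ^ (-δ - 1) * ((t ^ δ - ε ^ δ)/δ) ≤ 9/(4*δ) * t⁻¹ := by
        have h1 : (t ^ δ - ε ^ δ)/δ ≤ t ^ δ/δ := by
          apply div_le_div_of_nonneg_right _ hδ0.le
          have : (0:ℝ) ≤ ε ^ δ := Real.rpow_nonneg hε0.le δ
          linarith
        have h2 : 9/4 * t ^ (-δ - 1) * (t ^ δ/δ) = 9/(4*δ) * t⁻¹ := by
          have e : t ^ (-δ - 1) * t ^ δ = t⁻¹ := by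
            rw [← Real.rpow_add ht]
            rw [show -δ - 1 + δ = -1 by ring, Real.rpow_neg_one]
          calc 9/4 * t ^ (-δ - 1) * (t ^ δ/δ) = 9/(4*δ) * (t ^ (-δ - 1) * t ^ δ) := by
                field_simp
            _ = 9/(4*δ) * t⁻¹ := by rw [e]
        calc 9/4 * t ^ (-δ - 1) * ((t ^ δ - ε ^ δ)/δ)
            ≤ 9/4 * t ^ (-δ - 1) * (t ^ δ/δ) := by
              apply mul_le_mul_of_nonneg_left h1
              positivity
          _ = 9/(4*δ) * t⁻¹ := h2
      linarith [step.trans_eq hcomp]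
    -- second piece
    have intb2 : IntegrableOn (fun s : ℝ => 9/4 * t ^ (δ - 1) * s ^ (-δ - 1)) (Set.Ioc t 1) := by
      apply IntegrableOn.mono_set _ Set.Ioc_subset_Icc_self
      apply ContinuousOn.integrableOn_compact isCompact_Icc
      apply continuousOn_const.mul
      intro s hs
      exact (Real.continuousAt_rpow_const s (-δ - 1)
        (Or.inl (ne_of_gt (ht.trans_le hs.1)))).continuousWithinAt
    have hb2 : (∫ s in Set.Ioc t 1, g t s) ≤ 9/(4*δ) * t⁻¹ := by
      have step : (∫ s in Set.Ioc t 1, g t s)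
          ≤ ∫ s in Set.Ioc t 1, 9/4 * t ^ (δ - 1) * s ^ (-δ - 1) := by
        apply setIntegral_mono_on int2 intb2 measurableSet_Ioc
        intro s hs
        have hts : t ≤ s := le_of_lt hs.1
        have hsym : g t s
            = ((1/2 : ℝ) * (t ^ p + s ^ p - |s - t| ^ p)) ^ 2 / (s ^ (p + 1) * t ^ (p + 1)) := by
          rw [hgdef]
          simp only []
          rw [abs_sub_comm]
          ring
        rw [hsym]
        have := aux_g_le hp0 hp2 ht hts hδeq
        calc ((1/2 : ℝ) * (t ^ p + s ^ p - |s - t| ^ p)) ^ 2 / (s ^ (p + 1) * t ^ (p + 1))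
            ≤ 9/4 * (s ^ (-δ - 1) * t ^ (δ - 1)) := this
          _ = 9/4 * t ^ (δ - 1) * s ^ (-δ - 1) := by ring
      have hcomp : ∫ s in Set.Ioc t 1, 9/4 * t ^ (δ - 1) * s ^ (-δ - 1)
          = 9/4 * t ^ (δ - 1) * ((t ^ (-δ) - 1)/δ) := by
        rw [MeasureTheory.integral_const_mul]
        congr 1
        rw [← intervalIntegral.integral_of_le htA.2,
          integral_rpow (Or.inr ⟨by intro h; apply hδ0.ne'; linarith,
            Set.notMem_uIcc_of_lt ht one_pos⟩)]
        rw [show -δ - 1 + 1 = -δ by ring, Real.one_rpow]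
        ring
      have hfin : 9/4 * t ^ (δ - 1) * ((t ^ (-δ) - 1)/δ) ≤ 9/(4*δ) * t⁻¹ := by
        have h1 : (t ^ (-δ) - 1)/δ ≤ t ^ (-δ)/δ := by
          apply div_le_div_of_nonneg_right (by linarith) hδ0.le
        have h2 : 9/4 * t ^ (δ - 1) * (t ^ (-δ)/δ) = 9/(4*δ) * t⁻¹ := by
          have e : t ^ (δ - 1) * t ^ (-δ) = t⁻¹ := by
            rw [← Real.rpow_add ht]
            rw [show δ - 1 + -δ = -1 by ring, Real.rpow_neg_one]
          calc 9/4 * t ^ (δ - 1) * (t ^ (-δ)/δ) = 9/(4*δ) * (t ^ (δ - 1) * t ^ (-δ)) := by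
                field_simp
            _ = 9/(4*δ) * t⁻¹ := by rw [e]
        calc 9/4 * t ^ (δ - 1) * ((t ^ (-δ) - 1)/δ)
            ≤ 9/4 * t ^ (δ - 1) * (t ^ (-δ)/δ) := by
              apply mul_le_mul_of_nonneg_left h1
              positivity
          _ = 9/(4*δ) * t⁻¹ := h2
      linarith [step.trans_eq hcomp]
    rw [hsplit]
    have : 9/(4*δ) * t⁻¹ + 9/(4*δ) * t⁻¹ = 9/(2*δ) * t⁻¹ := by
      field_simp
      ring
    linarith
  -- lower bound on the inner integral
  have hFlow : ∀ t ∈ Set.Icc (2*ε) (1:ℝ), 1/8 * t⁻¹ ≤ F t := by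
    intro t htB
    have ht : 0 < t := lt_of_lt_of_le (by linarith) htB.1
    have hsub : Set.Icc (t/2) t ⊆ Set.Icc ε 1 :=
      Set.Icc_subset_Icc (by linarith [htB.1]) htB.2
    have step1 : (∫ s in Set.Icc (t/2) t, g t s) ≤ F t := by
      apply setIntegral_mono_set (hgint t ht)
      · apply ae_restrict_of_forall_mem measurableSet_Icc
        intro s hs
        exact hg0 t s ht (hε0.trans_le hs.1)
      · exact HasSubset.Subset.eventuallyLE hsub
    have step2 : (∫ s in Set.Icc (t/2) t, (1/4 : ℝ) * t ^ (-2:ℝ))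
        ≤ ∫ s in Set.Icc (t/2) t, g t s := by
      apply setIntegral_mono_on
      · exact integrableOn_const measure_Icc_lt_top.ne
      · exact (hgint t ht).mono_set hsub
      · exact measurableSet_Icc
      · intro s hs
        exact aux_g_ge hp0 ht hs.1 hs.2
    have hconst : (∫ s in Set.Icc (t/2) t, (1/4 : ℝ) * t ^ (-2:ℝ))
        = (t - t/2) * ((1/4 : ℝ) * t ^ (-2:ℝ)) := by
      rw [setIntegral_const, Real.volume_real_Icc_of_le (by linarith), smul_eq_mul]
    have hval : 1/8 * t⁻¹ ≤ (t - t/2) * ((1/4 : ℝ) * t ^ (-2:ℝ)) := by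
      have e2 : t ^ (1:ℝ) * t ^ (-2:ℝ) = t⁻¹ := by
        rw [← Real.rpow_add ht]
        norm_num
        exact Real.rpow_neg_one t
      rw [← e2, Real.rpow_one]
      apply le_of_eq
      ring
    linarith [hconst ▸ step2]
  -- integrability of F
  have hgm : Measurable (Function.uncurry g) := by
    have crp : Continuous fun u : ℝ => u ^ p := Real.continuous_rpow_const hp0.le
    have crp1 : Continuous fun u : ℝ => u ^ (p+1) := Real.continuous_rpow_const (by linarith)
    have c0 : Continuous fun x : ℝ × ℝ =>
        ((1/2 : ℝ) * (x.2 ^ p + x.1 ^ p - |x.1 - x.2| ^ p)) ^ 2 := by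
      apply Continuous.pow
      apply continuous_const.mul
      exact ((crp.comp continuous_snd).add (crp.comp continuous_fst)).sub
        (crp.comp ((continuous_fst.sub continuous_snd).abs))
    have c1 : Continuous fun x : ℝ × ℝ => x.1 ^ (p+1) * x.2 ^ (p+1) :=
      (crp1.comp continuous_fst).mul (crp1.comp continuous_snd)
    exact c0.measurable.div c1.measurable
  have hFmeas : StronglyMeasurable F := by
    rw [hFdef]
    exact StronglyMeasurable.integral_prod_right (hgm.stronglyMeasurable)
  have hFint : IntegrableOn F (Set.Icc ε 1) := by
    apply Integrable.mono' (g := fun _ : ℝ => 9/(2*δ) * ε⁻¹)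
    · exact integrableOn_const measure_Icc_lt_top.ne
    · exact hFmeas.aestronglyMeasurable.restrict
    · apply ae_restrict_of_forall_mem measurableSet_Icc
      intro t htA
      rw [Real.norm_eq_abs, abs_of_nonneg (hF0 t htA)]
      refine (hFup t htA).trans ?_
      have : t⁻¹ ≤ ε⁻¹ := one_div ε ▸ one_div t ▸
        one_div_le_one_div_of_le hε0 htA.1
      apply mul_le_mul_of_nonneg_left this
      positivity
  -- the two sides
  have hlog4 : 2 * Real.log 2 ≤ Real.log (1/ε) := by
    have h4 : (4:ℝ) ≤ 1/ε := by
      rw [le_div_iff₀ hε0]; linarith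
    have := Real.log_le_log (by norm_num : (0:ℝ) < 4) h4
    have e4 : Real.log 4 = 2 * Real.log 2 := by
      rw [show (4:ℝ) = 2^(2:ℕ) by norm_num, Real.log_pow]
      push_cast; ring
    linarith [e4 ▸ this]
  have hlog2 : 0 < Real.log 2 := Real.log_pos (by norm_num)
  have hIepsone : ∫ t in Set.Icc ε (1:ℝ), t⁻¹ = Real.log (1/ε) := by
    rw [integral_Icc_eq_integral_Ioc, ← intervalIntegral.integral_of_le hε1.le,
      integral_inv (Set.notMem_uIcc_of_lt hε0 one_pos)]
  -- upper bound
  have hupper : (∫ t in Set.Icc ε (1:ℝ), F t) ≤ 9/(2*δ) * Real.log (1/ε) := by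
    have hbint : IntegrableOn (fun t : ℝ => 9/(2*δ) * t⁻¹) (Set.Icc ε 1) := by
      apply ContinuousOn.integrableOn_compact isCompact_Icc
      apply continuousOn_const.mul
      apply ContinuousOn.inv₀ continuousOn_id
      intro t htA
      exact ne_of_gt (hε0.trans_le htA.1)
    have := setIntegral_mono_on hFint hbint measurableSet_Icc hFup
    rwa [MeasureTheory.integral_const_mul, hIepsone] at this
  -- lower bound
  have hlower : 1/8 * (Real.log (1/ε) - Real.log 2) ≤ ∫ t in Set.Icc ε (1:ℝ), F t := by
    have h2ε1 : 2*ε ≤ 1 := by linarith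
    have hsub2 : Set.Icc (2*ε) (1:ℝ) ⊆ Set.Icc ε 1 :=
      Set.Icc_subset_Icc (by linarith) le_rfl
    have step1 : (∫ t in Set.Icc (2*ε) (1:ℝ), F t) ≤ ∫ t in Set.Icc ε (1:ℝ), F t := by
      apply setIntegral_mono_set hFint
      · exact ae_restrict_of_forall_mem measurableSet_Icc hF0
      · exact HasSubset.Subset.eventuallyLE hsub2
    have hbint : IntegrableOn (fun t : ℝ => 1/8 * t⁻¹) (Set.Icc (2*ε) 1) := by
      apply ContinuousOn.integrableOn_compact isCompact_Icc
      apply continuousOn_const.mul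
      apply ContinuousOn.inv₀ continuousOn_id
      intro t htA
      exact ne_of_gt (lt_of_lt_of_le (by linarith) htA.1)
    have step2 : (∫ t in Set.Icc (2*ε) (1:ℝ), (1/8 : ℝ) * t⁻¹)
        ≤ ∫ t in Set.Icc (2*ε) (1:ℝ), F t := by
      apply setIntegral_mono_on hbint (hFint.mono_set hsub2) measurableSet_Icc hFlow
    have hcomp : (∫ t in Set.Icc (2*ε) (1:ℝ), (1/8 : ℝ) * t⁻¹)
        = 1/8 * Real.log (1/(2*ε)) := by
      rw [MeasureTheory.integral_const_mul]
      congr 1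
      rw [integral_Icc_eq_integral_Ioc, ← intervalIntegral.integral_of_le h2ε1,
        integral_inv (Set.notMem_uIcc_of_lt (by linarith) one_pos)]
    have hloge : Real.log (1/(2*ε)) = Real.log (1/ε) - Real.log 2 := by
      rw [one_div, one_div, mul_inv, Real.log_mul (by norm_num) (by positivity),
        Real.log_inv 2]
      ring
    calc 1/8 * (Real.log (1/ε) - Real.log 2) = 1/8 * Real.log (1/(2*ε)) := by rw [hloge]
      _ = ∫ t in Set.Icc (2*ε) (1:ℝ), (1/8 : ℝ) * t⁻¹ := hcomp.symm
      _ ≤ ∫ t in Set.Icc (2*ε) (1:ℝ), F t := step2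
      _ ≤ ∫ t in Set.Icc ε (1:ℝ), F t := step1
  constructor
  · show (1:ℝ)/16 * Real.log (1/ε) ≤ 2 * ∫ t in Set.Icc ε 1, F t
    nlinarith [hlower, hlog4, hlog2]
  · show 2 * (∫ t in Set.Icc ε 1, F t) ≤ 9/δ * Real.log (1/ε)
    have : 2 * (9/(2*δ)) * Real.log (1/ε) = 9/δ * Real.log (1/ε) := by
      field_simp
    nlinarith [hupper]
end
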